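/- Non-overlapping μ-reduction under polar evaluation order: in the symmetric data/codata calculus extended with μ-abstractions, under the polar evaluation order, for every type T it is never the case that both Subst(μ(x :prd T).c₁) and Subst(μ(y :con T).c₂) hold; consequently the two μ-reduction rules R-μ₁ and R-μ₂ never both apply to the same command μ(x :prd T).c₁ ≫ μ(y :con T).c₂. -/
import Mathlib


namespace SymCalc

/-! Basic syntactic categories of the symmetric data/codata calculus (CPS fragment). -/

abbrev Var := String
abbrev TName := String
abbrev XName := String

inductive Polarity | dat | cod
deriving DecidableEq, Repr

inductive Orientation | prd | con
deriving DecidableEq, Repr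

inductive Strategy | cbv | cbn
deriving DecidableEq, Repr

def Polarity.flip : Polarity → Polarity
  | .dat => .cod | .cod => .dat

def Orientation.flip : Orientation → Orientation
  | .prd => .con | .con => .prd

def Strategy.flip : Strategy → Strategy
  | .cbv => .cbn | .cbn => .cbv

/-- `val p` : the orientation of the canonical xtors of a type of polarity `p`. -/
def Polarity.val : Polarity → Orientation
  | .dat => .prd | .cod => .con

/-- `cnt p` : the orientation of (co)pattern matches on a type of polarity `p`. -/
def Polarity.cnt : Polarity → Orientation
  | .dat => .con | .cod => .prd

/-- Typing contexts: each variable carries an orientation (producer/consumer) and a type name.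
The head of the list is the innermost binding. -/
abbrev Ctx := List (Var × Orientation × TName)

/-- Erase the variable names of a context, keeping orientations and types. -/
def eraseCtx (Γ : Ctx) : List (Orientation × TName) := Γ.map (·.2)

mutual
/-- Expressions `e ::= x | 𝒳σ | match_p T { 𝒳Δ ⇒ c; … } | μ(x :ᵒ T).c`.
In `mu o x T c` the orientation `o` is the orientation of the μ-abstraction itself
(a producer μ-abstraction `μ(x :prd T).c` abstracts over a consumer variable `x`,
and dually for consumer μ-abstractions). -/
inductive Expr : Type
  | var : Var → Expr
  | xtor : XName → List Expr → Expr
  | mtch : Polarity → TName → List (XName × Ctx × Cmd) → Expr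
  | mu : Orientation → Var → TName → Cmd → Expr
/-- Commands `c ::= e₁ ≫ e₂ | Done`. -/
inductive Cmd : Type
  | cut : Expr → Expr → Cmd
  | done : Cmd
end

/-! Substitution. -/

abbrev Env := List (Var × Expr)

/-- Remove the bindings shadowed by the bound variables `xs`. -/
def shadowV (xs : List Var) (m : Env) : Env :=
  m.filter (fun q => ¬ xs.contains q.1)

mutual
/-- Substitute the (closed) expressions of `m` for free variables in an expression. -/
def substExpr (m : Env) : Expr → Expr
  | .var x => (m.lookup x).getD (.var x)
  | .xtor n σ => .xtor n (σ.attach.map (fun ⟨e, _⟩ => substExpr m e))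
  | .mtch p T cases =>
      .mtch p T (cases.attach.map
        (fun ⟨cs, _⟩ => (cs.1, cs.2.1, substCmd (shadowV (cs.2.1.map (·.1)) m) cs.2.2)))
  | .mu o x T c => .mu o x T (substCmd (shadowV [x] m) c)
termination_by e => sizeOf e
decreasing_by
  · have h := List.sizeOf_lt_of_mem ‹e ∈ σ›
    simp only [Expr.xtor.sizeOf_spec]; omega
  · have h := List.sizeOf_lt_of_mem ‹cs ∈ cases›
    obtain ⟨n', Δ', c'⟩ := cs
    simp only [Expr.mtch.sizeOf_spec, Prod.mk.sizeOf_spec] at h ⊢; omega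
  · simp only [Expr.mu.sizeOf_spec]; omega
/-- Substitute the (closed) expressions of `m` for free variables in a command. -/
def substCmd (m : Env) : Cmd → Cmd
  | .cut e₁ e₂ => .cut (substExpr m e₁) (substExpr m e₂)
  | .done => .done
termination_by c => sizeOf c
decreasing_by
  · simp only [Cmd.cut.sizeOf_spec]; omega
  · simp only [Cmd.cut.sizeOf_spec]; omega
end

/-- Pair the variables of a context with the expressions of a substitution. -/
def bindArgs (Δ : Ctx) (σ : List Expr) : Env := List.zip (Δ.map (·.1)) σ

/-! Programs. -/

/-- A function declaration `𝒳Π := match_p T { 𝒴Δ ⇒ c; … }` (co)pattern matching on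
all xtors of the type it belongs to. -/
structure FunDecl where
  name : XName
  args : Ctx
  cases : List (XName × Ctx × Cmd)

/-- A type declaration `s p type T { 𝒳Δ; … } with f₁ … fₙ`. -/
structure TypeDecl where
  strat : Strategy
  pol : Polarity
  name : TName
  xtors : List (XName × Ctx)
  funs : List FunDecl

/-- A program: a list of type declarations together with a top-level command. -/
structure Program where
  decls : List TypeDecl
  main : Cmd

def Program.findType (P : Program) (T : TName) : Option TypeDecl :=
  P.decls.find? (fun td => td.name = T)

/-- The polarity of the type named `T` in the program, if declared. -/
def polOf? (P : Program) (T : TName) : Option Polarity := (P.findType T).map (·.pol)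

/-- The evaluation strategy of the type named `T` in the program, if declared. -/
def stratOf? (P : Program) (T : TName) : Option Strategy := (P.findType T).map (·.strat)

/-- The identity substitution `id_Γ`: the list of the variables bound in `Γ`, in order. -/
def idSubst (Γ : Ctx) : List Expr := Γ.map (fun g => Expr.var g.1)

/-! Free variables. -/

mutual
/-- `FVE x e`: the variable `x` occurs free in the expression `e`. -/
inductive FVE : Var → Expr → Prop
  | var : ∀ x, FVE x (.var x)
  | xtor : ∀ x n σ e, e ∈ σ → FVE x e → FVE x (.xtor n σ)
  | mtch : ∀ x p T cases cs, cs ∈ cases → FVC x cs.2.2 →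
      (∀ v ∈ cs.2.1, v.1 ≠ x) → FVE x (.mtch p T cases)
  | mu : ∀ x o y T c, FVC x c → y ≠ x → FVE x (.mu o y T c)
/-- `FVC x c`: the variable `x` occurs free in the command `c`. -/
inductive FVC : Var → Cmd → Prop
  | cutl : ∀ x e₁ e₂, FVE x e₁ → FVC x (.cut e₁ e₂)
  | cutr : ∀ x e₁ e₂, FVE x e₂ → FVC x (.cut e₁ e₂)
end


/-! The substitutability predicate `Subst(e)` under the **polar** evaluation order. -/

/-- `Subst(e)` for the polar evaluation order: xtor applications and function calls,
(co)pattern matches and variables are always substitutable; a consumer μ-abstraction is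
substitutable exactly at data types, and a producer μ-abstraction exactly at codata types. -/
inductive PolarSubst (P : Program) : Expr → Prop
  | var : ∀ x, PolarSubst P (.var x)
  | xtor : ∀ n σ, PolarSubst P (.xtor n σ)
  | mtch : ∀ p T cases, PolarSubst P (.mtch p T cases)
  | muCon : ∀ x T c, polOf? P T = some .dat → PolarSubst P (.mu .con x T c)
  | muPrd : ∀ x T c, polOf? P T = some .cod → PolarSubst P (.mu .prd x T c)

/-! Operational semantics (with the μ-rules, side conditions given by the polar `Subst`). -/

/-- One-step reduction of closed commands, relative to a program `P`, under the polar
evaluation order: the rules Match, Comatch, ConCall, PrdCall of the CPS fragment together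
with R-μ₁ and R-μ₂. -/
inductive Step (P : Program) : Cmd → Cmd → Prop
  | mtch : ∀ X σ T cases Δ c, (X, Δ, c) ∈ cases →
      Step P (.cut (.xtor X σ) (.mtch .dat T cases)) (substCmd (bindArgs Δ σ) c)
  | comtch : ∀ X σ T cases Δ c, (X, Δ, c) ∈ cases →
      Step P (.cut (.mtch .cod T cases) (.xtor X σ)) (substCmd (bindArgs Δ σ) c)
  | conCall : ∀ td f Y Δ c σ τ, td ∈ P.decls → td.pol = .dat → f ∈ td.funs →
      (Y, Δ, c) ∈ f.cases →
      Step P (.cut (.xtor Y τ) (.xtor f.name σ))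
        (substCmd (bindArgs f.args σ) (substCmd (bindArgs Δ τ) c))
  | prdCall : ∀ td f Y Δ c σ τ, td ∈ P.decls → td.pol = .cod → f ∈ td.funs →
      (Y, Δ, c) ∈ f.cases →
      Step P (.cut (.xtor f.name σ) (.xtor Y τ))
        (substCmd (bindArgs f.args σ) (substCmd (bindArgs Δ τ) c))
  | mu1 : ∀ x T c e, PolarSubst P e →
      Step P (.cut (.mu .prd x T c) e) (substCmd [(x, e)] c)
  | mu2 : ∀ x T c e, PolarSubst P e →
      Step P (.cut e (.mu .con x T c)) (substCmd [(x, e)] c)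

/-- The reduction rule R-μ₁ applies to the command `c`. -/
def Rmu1Applies (P : Program) (c : Cmd) : Prop :=
  ∃ x T c' e, c = .cut (.mu .prd x T c') e ∧ PolarSubst P e

/-- The reduction rule R-μ₂ applies to the command `c`. -/
def Rmu2Applies (P : Program) (c : Cmd) : Prop :=
  ∃ x T c' e, c = .cut e (.mu .con x T c') ∧ PolarSubst P e

/-- **Non-overlapping μ-reduction under the polar evaluation order**: for every type `T`
it is never the case that both the producer μ-abstraction and the consumer μ-abstraction
at `T` are substitutable; consequently R-μ₁ and R-μ₂ never both apply to the same command
`μ(x :prd T).c₁ ≫ μ(y :con T).c₂`. -/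
theorem polar_mu_no_overlap (P : Program) :
    (∀ (T : TName) (x y : Var) (c₁ c₂ : Cmd),
      ¬ (PolarSubst P (.mu .prd x T c₁) ∧ PolarSubst P (.mu .con y T c₂))) ∧
    (∀ (T : TName) (x y : Var) (c₁ c₂ : Cmd),
      ¬ (Rmu1Applies P (.cut (.mu .prd x T c₁) (.mu .con y T c₂)) ∧
         Rmu2Applies P (.cut (.mu .prd x T c₁) (.mu .con y T c₂)))) := by
  have key : ∀ (T : TName) (x y : Var) (c₁ c₂ : Cmd),
      ¬ (PolarSubst P (.mu .prd x T c₁) ∧ PolarSubst P (.mu .con y T c₂)) := by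
    rintro T x y c₁ c₂ ⟨h₁, h₂⟩
    cases h₁ with
    | muPrd _ _ _ hc =>
      cases h₂ with
      | muCon _ _ _ hd => rw [hc] at hd; simp at hd
  refine ⟨key, ?_⟩
  rintro T x y c₁ c₂ ⟨⟨x', T', c', e', heq, hs1⟩, ⟨x'', T'', c'', e'', heq2, hs2⟩⟩
  cases heq; cases heq2
  exact key T x y c₁ c₂ ⟨hs2, hs1⟩

end SymCalc
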